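/- arXiv:1811.11770 — 3 statements merged into one kernel-verified Lean document; each statement's English description precedes it below -/
import Mathlib

section
/- Björner's edge labelling of the partition lattice is an EL-labelling: in every interval [λ, ω] of the partition lattice of {1,...,n}, there is exactly one maximal chain whose sequence of edge labels is strictly increasing, where the edge obtained by merging two blocks A and B (with all other blocks unchanged) is labelled by max(min A, min B). -/
/-- The minimum of a block `A ⊆ Fin n`, regarded 1-based (elements of
`{1, …, n}`). -/
noncomputable def minOf {n : ℕ} (A : Set (Fin n)) : ℕ :=
  sInf ((fun x : Fin n => (x : ℕ) + 1) '' A)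

/-- Björner's label of the covering edge `l ⋖ m` in the partition lattice:
`m` is obtained from `l` by merging two blocks `A` and `B`, and the label is
`max (min A) (min B)`. -/
def IsBjLabel {n : ℕ} (l m : Setoid (Fin n)) (k : ℕ) : Prop :=
  ∃ A B : Set (Fin n), A ∈ l.classes ∧ B ∈ l.classes ∧ A ≠ B ∧
    m.classes = (l.classes \ {A, B}) ∪ {A ∪ B} ∧
    k = max (minOf A) (minOf B)

/-- A saturated (maximal) chain from `x` to `y`. -/
def IsSatChain {n : ℕ} (x y : Setoid (Fin n)) (c : List (Setoid (Fin n))) : Prop :=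
  c.Chain' (· ⋖ ·) ∧ c.head? = some x ∧ c.getLast? = some y

/-- `LabelSeq c ks` : `ks` is the sequence of Björner labels of the
consecutive edges of the chain `c`, read from bottom to top. -/
inductive LabelSeq {n : ℕ} : List (Setoid (Fin n)) → List ℕ → Prop
  | nil : LabelSeq [] []
  | single (x : Setoid (Fin n)) : LabelSeq [x] []
  | cons {x y : Setoid (Fin n)} {rest : List (Setoid (Fin n))} {k : ℕ} {ks : List ℕ} :
      IsBjLabel x y k → LabelSeq (y :: rest) ks → LabelSeq (x :: y :: rest) (k :: ks)

/-!
Write `M(λ) ⊆ {1, …, n}` for the set of block minima of a partition `λ`. Merging two blocks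
with minima `a < b` removes exactly `b` from `M`, and `b` is the Björner label of the edge. Hence
along every maximal chain of `[λ, ω]` the labels are the elements of `M(λ) \ M(ω)`, each used
once, and an increasing chain must start with the label `k = min (M(λ) \ M(ω))`. The block with
minimum `k` must then be merged with a block whose minimum `a < k` already lies in `M(ω)`, so `a`
is the minimum of the `ω`-block of `k`: the first step is forced, which gives uniqueness by
induction, and the same step always exists, which gives existence.
-/

namespace Setoid

variable {α : Type*}

instance [Finite α] : Finite (Setoid α) :=
  Finite.of_injective (fun r : Setoid α => (r : α → α → Prop)) fun _ _ h =>
    Setoid.ext fun a b => Iff.of_eq (congr_fun₂ h a b)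

def merge (r : Setoid α) (a b : α) : Setoid α where
  r x y := r x y ∨ ((r x a ∨ r x b) ∧ (r y a ∨ r y b))
  iseqv := by
    refine ⟨fun x => Or.inl (r.refl x), ?_, ?_⟩
    · rintro x y (h | ⟨hx, hy⟩)
      · exact Or.inl (r.symm h)
      · exact Or.inr ⟨hy, hx⟩
    · rintro x y z (h | ⟨hx, hy⟩) (h' | ⟨hy', hz'⟩)
      · exact Or.inl (r.trans h h')
      · exact Or.inr ⟨hy'.imp (r.trans h) (r.trans h), hz'⟩
      · exact Or.inr ⟨hx, hy.imp (r.trans (r.symm h')) (r.trans (r.symm h'))⟩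
      · exact Or.inr ⟨hx, hz'⟩

variable {r s : Setoid α} {a b x y : α}

lemma le_merge (r : Setoid α) (a b : α) : r ≤ r.merge a b :=
  fun _ _ => Or.inl

lemma merge_rel (r : Setoid α) (a b : α) : r.merge a b a b :=
  Or.inr ⟨Or.inl (r.refl a), Or.inr (r.refl b)⟩

lemma merge_le (hrs : r ≤ s) (hab : s a b) : r.merge a b ≤ s := by
  rintro x y (h | ⟨hx, hy⟩)
  · exact hrs h
  · have toA {z} (hz : r z a ∨ r z b) : s z a :=
      hz.elim (fun h => hrs h) fun h => s.trans (hrs h) (s.symm hab)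
    exact s.trans (toA hx) (s.symm (toA hy))

lemma covBy_merge (hab : ¬ r a b) : r ⋖ r.merge a b := by
  refine ⟨(le_merge r a b).lt_of_ne fun h => hab (by rw [h]; exact merge_rel r a b),
    fun s hrs hsm => ?_⟩
  obtain ⟨x, y, hsxy, hrxy⟩ : ∃ x y, s x y ∧ ¬ r x y := by
    by_contra! h
    exact hrs.not_ge fun x y => h x y
  have hsab : s a b := by
    rcases hsm.le hsxy with h | ⟨hx | hx, hy | hy⟩
    · exact absurd h hrxy
    · exact absurd (r.trans hx (r.symm hy)) hrxy
    · exact s.trans (s.symm (hrs.le hx)) (s.trans hsxy (hrs.le hy))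
    · exact s.trans (s.symm (hrs.le hy)) (s.trans (s.symm hsxy) (hrs.le hx))
    · exact absurd (r.trans hx (r.symm hy)) hrxy
  exact (merge_le hrs.le hsab).not_gt hsm

lemma setOf_rel_eq_of_rel (h : r a b) : {x | r x a} = {x | r x b} :=
  Set.ext fun _ => ⟨fun hx => r.trans hx h, fun hx => r.trans hx (r.symm h)⟩

lemma setOf_merge_of_rel (hy : r y a ∨ r y b) :
    {x | r.merge a b x y} = {x | r x a} ∪ {x | r x b} := by
  ext x
  constructor
  · rintro (h | ⟨hx, -⟩)
    · exact hy.imp (r.trans h) (r.trans h)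
    · exact hx
  · exact fun hx => Or.inr ⟨hx, hy⟩

lemma setOf_merge_of_not_rel (ha : ¬ r y a) (hb : ¬ r y b) :
    {x | r.merge a b x y} = {x | r x y} := by
  ext x
  constructor
  · rintro (h | ⟨-, hy | hy⟩)
    · exact h
    · exact absurd hy ha
    · exact absurd hy hb
  · exact Or.inl

lemma classes_merge (r : Setoid α) (a b : α) :
    (r.merge a b).classes =
      r.classes \ {{x | r x a}, {x | r x b}} ∪ {{x | r x a} ∪ {x | r x b}} := by
  ext C
  constructor
  · rintro ⟨y, rfl⟩
    by_cases hy : r y a ∨ r y b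
    · exact Or.inr (setOf_merge_of_rel hy)
    · rw [not_or] at hy
      rw [setOf_merge_of_not_rel hy.1 hy.2]
      refine Or.inl ⟨r.mem_classes y, ?_⟩
      simp only [Set.mem_insert_iff, Set.mem_singleton_iff, not_or]
      exact ⟨fun h => hy.1 (h ▸ r.refl y : y ∈ {x | r x a}),
        fun h => hy.2 (h ▸ r.refl y : y ∈ {x | r x b})⟩
  · rintro (⟨⟨y, rfl⟩, hC⟩ | rfl)
    · have hya : ¬ r y a := fun h => hC (Or.inl (setOf_rel_eq_of_rel h))
      have hyb : ¬ r y b := fun h => hC (Or.inr (setOf_rel_eq_of_rel h))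
      exact ⟨y, (setOf_merge_of_not_rel hya hyb).symm⟩
    · exact ⟨a, (setOf_merge_of_rel (Or.inl (r.refl a))).symm⟩

def IsBlockMin [LE α] (r : Setoid α) (x : α) : Prop :=
  ∀ y, r x y → x ≤ y

lemma IsBlockMin.of_le [LE α] (hrs : r ≤ s) (hx : s.IsBlockMin x) : r.IsBlockMin x :=
  fun y hy => hx y (hrs hy)

lemma IsBlockMin.eq [PartialOrder α] (hx : r.IsBlockMin x) (hy : r.IsBlockMin y) (h : r x y) :
    x = y :=
  le_antisymm (hx y h) (hy x (r.symm h))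

lemma exists_isBlockMin [LinearOrder α] [WellFoundedLT α] (r : Setoid α) (x : α) :
    ∃ m, r m x ∧ r.IsBlockMin m := by
  obtain ⟨m, hmx, hmin⟩ := wellFounded_lt.has_min {m | r m x} ⟨x, r.refl x⟩
  exact ⟨m, hmx, fun y hy => not_lt.1 (hmin y (r.trans (r.symm hy) hmx))⟩

lemma eq_of_le_of_isBlockMin [LinearOrder α] [WellFoundedLT α] (hrs : r ≤ s)
    (h : ∀ x, r.IsBlockMin x → s.IsBlockMin x) : r = s := by
  refine le_antisymm hrs fun x y hxy => ?_
  obtain ⟨mx, hmx, hx⟩ := r.exists_isBlockMin x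
  obtain ⟨my, hmy, hy⟩ := r.exists_isBlockMin y
  have hs : s mx my := s.trans (hrs hmx) (s.trans hxy (s.symm (hrs hmy)))
  rw [(h mx hx).eq (h my hy) hs] at hmx
  exact r.trans (r.symm hmx) hmy

lemma isBlockMin_merge_iff [LinearOrder α] (ha : r.IsBlockMin a) (hb : r.IsBlockMin b)
    (hab : a < b) : (r.merge a b).IsBlockMin x ↔ r.IsBlockMin x ∧ x ≠ b := by
  constructor
  · intro hx
    refine ⟨hx.of_le (le_merge r a b), ?_⟩
    rintro rfl
    exact (hx a ((r.merge a x).symm (merge_rel r a x))).not_gt hab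
  · rintro ⟨hx, hxb⟩ y (hy | ⟨hxa | hxb', hya | hyb⟩)
    · exact hx y hy
    · exact hx.eq ha hxa ▸ ha y (r.symm hya)
    · exact hx.eq ha hxa ▸ hab.le.trans (hb y (r.symm hyb))
    · exact absurd (hx.eq hb hxb') hxb
    · exact absurd (hx.eq hb hxb') hxb

end Setoid

open Setoid

section Bjorner

variable {n : ℕ} {l m w x x' : Setoid (Fin n)} {a b : Fin n} {k j : ℕ}

/-- Block minima, shifted to `{1, …, n}` like `minOf`. -/
def blockMins (l : Setoid (Fin n)) : Set ℕ :=
  (fun x : Fin n => (x : ℕ) + 1) '' {x | l.IsBlockMin x}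

lemma val_add_one_injective : Function.Injective fun x : Fin n => (x : ℕ) + 1 :=
  (add_left_injective 1).comp Fin.val_injective

lemma mem_blockMins_iff : (a : ℕ) + 1 ∈ blockMins l ↔ l.IsBlockMin a :=
  val_add_one_injective.mem_set_image

lemma blockMins_anti (hlw : l ≤ w) : blockMins w ⊆ blockMins l :=
  Set.image_mono fun _ => IsBlockMin.of_le hlw

lemma eq_of_blockMins_subset (hlw : l ≤ w) (h : blockMins l ⊆ blockMins w) : l = w :=
  eq_of_le_of_isBlockMin hlw fun _ hx => mem_blockMins_iff.1 (h (mem_blockMins_iff.2 hx))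

lemma blockMins_merge (ha : l.IsBlockMin a) (hb : l.IsBlockMin b) (hab : a < b) :
    blockMins (l.merge a b) = blockMins l \ {(b : ℕ) + 1} := by
  have : {x | (l.merge a b).IsBlockMin x} = {x | l.IsBlockMin x} \ {b} := by
    ext x
    exact isBlockMin_merge_iff ha hb hab
  rw [blockMins, this, Set.image_sdiff val_add_one_injective,
    Set.image_singleton, blockMins]

lemma minOf_setOf_rel (ha : l.IsBlockMin a) : minOf {x | l x a} = (a : ℕ) + 1 := by
  refine IsLeast.csInf_eq ⟨⟨a, l.refl a, rfl⟩, ?_⟩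
  rintro _ ⟨y, hy, rfl⟩
  exact Nat.add_le_add_right (ha y (l.symm hy)) 1

lemma isBjLabel_merge (ha : l.IsBlockMin a) (hb : l.IsBlockMin b) (hab : a < b) :
    IsBjLabel l (l.merge a b) ((b : ℕ) + 1) := by
  have hnab : ¬ l a b := fun h => hab.ne (ha.eq hb h)
  refine ⟨_, _, l.mem_classes a, l.mem_classes b,
    fun h => hnab (h ▸ l.refl a : a ∈ {x | l x b}), l.classes_merge a b, ?_⟩
  rw [minOf_setOf_rel ha, minOf_setOf_rel hb]
  omega

lemma IsBjLabel.exists_merge (h : IsBjLabel l m k) :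
    ∃ a b, l.IsBlockMin a ∧ l.IsBlockMin b ∧ a < b ∧ k = (b : ℕ) + 1 ∧ m = l.merge a b := by
  obtain ⟨_, _, ⟨y, rfl⟩, ⟨z, rfl⟩, hne, hcls, rfl⟩ := h
  obtain ⟨a, hay, ha⟩ := l.exists_isBlockMin y
  obtain ⟨b, hbz, hb⟩ := l.exists_isBlockMin z
  rw [← setOf_rel_eq_of_rel hay, ← setOf_rel_eq_of_rel hbz] at hne hcls
  rw [← setOf_rel_eq_of_rel hay, ← setOf_rel_eq_of_rel hbz, minOf_setOf_rel ha,
    minOf_setOf_rel hb]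
  rcases lt_or_gt_of_ne fun h : a = b => hne (h ▸ rfl) with hab | hab
  · exact ⟨a, b, ha, hb, hab, by omega, classes_inj.2 (hcls.trans (l.classes_merge a b).symm)⟩
  · refine ⟨b, a, hb, ha, hab, by omega, classes_inj.2 (hcls.trans ?_)⟩
    rw [classes_merge, Set.pair_comm {x | l x b}, Set.union_comm {x | l x b}]

lemma IsBjLabel.covBy (h : IsBjLabel l m k) : l ⋖ m := by
  obtain ⟨a, b, ha, hb, hab, -, rfl⟩ := h.exists_merge
  exact covBy_merge fun h => hab.ne (ha.eq hb h)

lemma IsBjLabel.blockMins_eq (h : IsBjLabel l m k) :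
    k ∈ blockMins l ∧ blockMins m = blockMins l \ {k} := by
  obtain ⟨a, b, ha, hb, hab, rfl, rfl⟩ := h.exists_merge
  exact ⟨mem_blockMins_iff.2 hb, blockMins_merge ha hb hab⟩

/-- The other merged block's minimum `a < b` is a block minimum of `w`, since otherwise `a + 1`
would be an element of `blockMins l \ blockMins w` below `k`. -/
lemma IsBjLabel.exists_eq_merge (h : IsBjLabel l x k) (hxw : x ≤ w)
    (hk : k ∈ lowerBounds (blockMins l \ blockMins w)) :
    ∃ a b, w.IsBlockMin a ∧ w a b ∧ k = (b : ℕ) + 1 ∧ x = l.merge a b := by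
  obtain ⟨a, b, ha, -, hab, rfl, rfl⟩ := h.exists_merge
  refine ⟨a, b, ?_, hxw (merge_rel l a b), rfl, rfl⟩
  by_contra haw
  have := hk ⟨mem_blockMins_iff.2 ha, mt mem_blockMins_iff.1 haw⟩
  omega

lemma IsBjLabel.eq_of_mem_lowerBounds (h : IsBjLabel l x k) (h' : IsBjLabel l x' k)
    (hxw : x ≤ w) (hx'w : x' ≤ w) (hk : k ∈ lowerBounds (blockMins l \ blockMins w)) :
    x = x' := by
  obtain ⟨a, b, ha, hab, hkb, rfl⟩ := h.exists_eq_merge hxw hk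
  obtain ⟨a', b', ha', hab', hkb', rfl⟩ := h'.exists_eq_merge hx'w hk
  obtain rfl : b = b' := Fin.ext (by omega)
  rw [ha.eq ha' (w.trans hab (w.symm hab'))]

lemma exists_isBjLabel_le (hlw : l ≤ w) (hk : k ∈ blockMins l \ blockMins w) :
    ∃ x, IsBjLabel l x k ∧ x ≤ w := by
  obtain ⟨⟨b, hb, rfl⟩, hbw⟩ := hk
  obtain ⟨a, hab, ha⟩ := w.exists_isBlockMin b
  have hne : a ≠ b := by
    rintro rfl
    exact hbw ⟨a, ha, rfl⟩
  exact ⟨l.merge a b, isBjLabel_merge (ha.of_le hlw) hb (lt_of_le_of_ne (ha b hab) hne),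
    merge_le hlw hab⟩

variable {c : List (Setoid (Fin n))} {ks : List ℕ}

lemma LabelSeq.le (h : LabelSeq c ks) (hx : c.head? = some x) (hw : c.getLast? = some w) :
    x ≤ w := by
  induction h generalizing x with
  | nil => cases hx
  | single z =>
    cases hx
    cases hw
    rfl
  | cons hk _ ih =>
    cases hx
    rw [List.getLast?_cons_cons] at hw
    exact hk.covBy.le.trans (ih rfl hw)

lemma LabelSeq.mem_iff (h : LabelSeq c ks) (hx : c.head? = some x) (hw : c.getLast? = some w) :
    j ∈ ks ↔ j ∈ blockMins x \ blockMins w := by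
  induction h generalizing x with
  | nil => cases hx
  | single z =>
    cases hx
    cases hw
    simp
  | @cons _ y _ k _ hk hks ih =>
    cases hx
    rw [List.getLast?_cons_cons] at hw
    obtain ⟨hkx, hy⟩ := hk.blockMins_eq
    have hkw : k ∉ blockMins w := fun h => (hy ▸ blockMins_anti (hks.le rfl hw) h).2 rfl
    rw [List.mem_cons, ih rfl hw, hy]
    by_cases hjk : j = k
    · simp [hjk, hkx, hkw]
    · simp [hjk]

def IsIncreasingChain (l w : Setoid (Fin n)) (c : List (Setoid (Fin n))) : Prop :=
  IsSatChain l w c ∧ ∃ ks : List ℕ, LabelSeq c ks ∧ ks.Pairwise (· < ·)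

lemma isIncreasingChain_singleton (l : Setoid (Fin n)) : IsIncreasingChain l l [l] :=
  ⟨⟨List.isChain_singleton l, rfl, rfl⟩, [], .single l, .nil⟩

lemma IsIncreasingChain.le (hc : IsIncreasingChain l w c) : l ≤ w := by
  obtain ⟨⟨-, hl, hw⟩, ks, hks, -⟩ := hc
  exact hks.le hl hw

lemma IsIncreasingChain.cons {r : List (Setoid (Fin n))} (hk : IsBjLabel l x k)
    (hkS : IsLeast (blockMins l \ blockMins w) k) (hc : IsIncreasingChain x w (x :: r)) :
    IsIncreasingChain l w (l :: x :: r) := by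
  obtain ⟨⟨hch, -, hw⟩, ks, hks, hsorted⟩ := hc
  refine ⟨⟨List.isChain_cons_cons.2 ⟨hk.covBy, hch⟩, rfl, by rwa [List.getLast?_cons_cons]⟩,
    k :: ks, .cons hk hks, List.pairwise_cons.2 ⟨fun j hj => ?_, hsorted⟩⟩
  rw [hks.mem_iff rfl hw, hk.blockMins_eq.2] at hj
  exact lt_of_le_of_ne (hkS.2 ⟨hj.1.1, hj.2⟩) (Ne.symm hj.1.2)

lemma IsIncreasingChain.of_cons {r : List (Setoid (Fin n))}
    (hc : IsIncreasingChain l w (l :: x :: r)) :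
    ∃ k, IsBjLabel l x k ∧ IsLeast (blockMins l \ blockMins w) k ∧
      IsIncreasingChain x w (x :: r) := by
  obtain ⟨⟨hch, -, hw⟩, ks, hks, hsorted⟩ := hc
  cases hks with
  | @cons _ _ _ k ks hk hks' =>
  have hmem (j : ℕ) := (LabelSeq.cons hk hks').mem_iff (j := j) rfl hw
  rw [List.getLast?_cons_cons] at hw
  refine ⟨k, hk, ⟨(hmem k).1 List.mem_cons_self, fun j hj => ?_⟩,
    ⟨(List.isChain_cons_cons.1 hch).2, rfl, hw⟩, ks, hks', (List.pairwise_cons.1 hsorted).2⟩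
  rcases List.mem_cons.1 ((hmem j).2 hj) with rfl | hj
  · exact le_rfl
  · exact ((List.pairwise_cons.1 hsorted).1 j hj).le

lemma IsIncreasingChain.eq_singleton (hc : IsIncreasingChain l l c) : c = [l] := by
  obtain ⟨_ | ⟨x, r⟩, rfl⟩ := List.head?_eq_some_iff.1 hc.1.2.1
  · rfl
  · obtain ⟨k, -, hk, -⟩ := hc.of_cons
    exact (hk.1.2 hk.1.1).elim

lemma IsSatChain.exists_cons_cons (hc : IsSatChain l w c) (hlw : l ≠ w) :
    ∃ x r, c = l :: x :: r := by
  obtain ⟨_ | ⟨x, r⟩, rfl⟩ := List.head?_eq_some_iff.1 hc.2.1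
  · exact absurd (Option.some.inj hc.2.2) hlw
  · exact ⟨x, r, rfl⟩

lemma IsIncreasingChain.unique {c' : List (Setoid (Fin n))} (hc : IsIncreasingChain l w c)
    (hc' : IsIncreasingChain l w c') : c = c' := by
  induction c generalizing l c' with
  | nil => cases hc.1.2.1
  | cons z t ih =>
    by_cases hlw : l = w
    · subst hlw
      rw [hc.eq_singleton, hc'.eq_singleton]
    obtain ⟨x, r, hc_eq⟩ := hc.1.exists_cons_cons hlw
    obtain ⟨rfl, rfl⟩ := List.cons_eq_cons.1 hc_eq
    obtain ⟨x', r', rfl⟩ := hc'.1.exists_cons_cons hlw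
    obtain ⟨k, hk, hkS, hxc⟩ := hc.of_cons
    obtain ⟨k', hk', hkS', hxc'⟩ := hc'.of_cons
    obtain rfl := hkS.unique hkS'
    obtain rfl := hk.eq_of_mem_lowerBounds hk' hxc.le hxc'.le hkS.2
    rw [ih hxc hxc']

lemma exists_isIncreasingChain (hlw : l ≤ w) : ∃ c, IsIncreasingChain l w c := by
  induction l using WellFoundedGT.induction with
  | _ l ih =>
  by_cases hl : l = w
  · exact ⟨[l], hl ▸ isIncreasingChain_singleton l⟩
  have hS : (blockMins l \ blockMins w).Nonempty :=
    Set.sdiff_nonempty.2 fun h => hl (eq_of_blockMins_subset hlw h)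
  have hk : IsLeast (blockMins l \ blockMins w) (sInf (blockMins l \ blockMins w)) :=
    ⟨Nat.sInf_mem hS, fun _ => Nat.sInf_le⟩
  obtain ⟨x, hx, hxw⟩ := exists_isBjLabel_le hlw hk.1
  obtain ⟨c, hc⟩ := ih x hx.covBy.lt hxw
  obtain ⟨r, rfl⟩ := List.head?_eq_some_iff.1 hc.1.2.1
  exact ⟨_, hc.cons hx hk⟩

end Bjorner

/-- Björner's edge labelling of the partition lattice is an EL-labelling:
every interval `[l, w]` contains exactly one maximal chain whose label
sequence is strictly increasing. -/
theorem stmt2 (n : ℕ) (l w : Setoid (Fin n)) (hlw : l ≤ w) :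
    ∃! c : List (Setoid (Fin n)),
      IsSatChain l w c ∧ ∃ ks : List ℕ, LabelSeq c ks ∧ ks.Pairwise (· < ·) := by
  obtain ⟨c, hc⟩ := exists_isIncreasingChain hlw
  exact ⟨c, hc, fun c' hc' => IsIncreasingChain.unique hc' hc⟩
end

section
/- In Björner's EL-labelling of the partition lattice, the unique increasing maximal chain in the interval from the discrete partition of {1,...,n} to the full partition {1,...,n} is the chain obtained by successively merging, at each step, the two blocks with the smallest minimal elements; equivalently, it is the chain ({1},...,{n}) ⋖ ({1,2},{3},...,{n}) ⋖ ({1,2,3},{4},...,{n}) ⋖ ... ⋖ {1,...,n}. -/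
/-- The partition of `Fin n` whose only non-singleton block is
`{0, 1, …, k}` (i.e. `{1, …, k+1}` in 1-based terms). -/
def initSetoid (n k : ℕ) : Setoid (Fin n) where
  r x y := x = y ∨ ((x : ℕ) ≤ k ∧ (y : ℕ) ≤ k)
  iseqv := by
    constructor
    · intro x; exact Or.inl rfl
    · intro x y h
      rcases h with rfl | ⟨h1, h2⟩
      · exact Or.inl rfl
      · exact Or.inr ⟨h2, h1⟩
    · intro x y z h1 h2
      rcases h1 with rfl | ⟨a, b⟩
      · exact h2
      · rcases h2 with rfl | ⟨c, d⟩
        · exact Or.inr ⟨a, b⟩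
        · exact Or.inr ⟨a, d⟩

theorem List.eq_range'_of_pairwise_lt {l : List ℕ} {a : ℕ} (hl : l.Pairwise (· < ·))
    (hbound : ∀ k ∈ l, a ≤ k ∧ k < a + l.length) : l = List.range' a l.length := by
  have hsub : l.toFinset ⊆ Finset.Ico a (a + l.length) := fun k hk => by
    simpa using hbound k (List.mem_toFinset.1 hk)
  have hcard : (Finset.Ico a (a + l.length)).card ≤ l.toFinset.card := by
    simp [List.toFinset_card_of_nodup hl.nodup]
  have hset : l.toFinset = (List.range' a l.length).toFinset := by
    rw [Finset.eq_of_subset_of_card_le hsub hcard]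
    ext k
    simp [List.mem_range'_1]
  exact (List.perm_of_nodup_nodup_toFinset_eq hl.nodup List.nodup_range' hset).eq_of_pairwise'
    hl List.pairwise_lt_range'

namespace Setoid

variable {α : Type*}

theorem ncard_classes (r : Setoid α) : r.classes.ncard = Nat.card (Quotient r) :=
  (Nat.card_coe_set_eq _).symm.trans (Nat.card_congr r.quotientEquivClasses.symm)

theorem ncard_classes_bot : (⊥ : Setoid α).classes.ncard = Nat.card α := by
  rw [ncard_classes, Nat.card_congr quotientBotEquiv]

theorem ncard_classes_top [Nonempty α] : (⊤ : Setoid α).classes.ncard = 1 := by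
  have : Subsingleton (Quotient (⊤ : Setoid α)) := Quotient.subsingleton_iff.2 rfl
  have : Nonempty (Quotient (⊤ : Setoid α)) := .map (Quotient.mk _) ‹_›
  rw [ncard_classes, Nat.card_unique]

theorem rel_iff_of_classes_eq_merge {r s : Setoid α} {A B : Set α}
    (hs : s.classes = (r.classes \ {A, B}) ∪ {A ∪ B}) {x y : α} :
    s x y ↔ r x y ∨ (x ∈ A ∪ B ∧ y ∈ A ∪ B) := by
  rw [rel_iff_exists_classes, hs]
  constructor
  · rintro ⟨c, hc | rfl, hx, hy⟩
    · exact Or.inl ((rel_iff_exists_classes r).2 ⟨c, hc.1, hx, hy⟩)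
    · exact Or.inr ⟨hx, hy⟩
  · rintro (hxy | hxy)
    · obtain ⟨c, hc, hx, hy⟩ := (rel_iff_exists_classes r).1 hxy
      by_cases hAB : c = A ∨ c = B
      · refine ⟨A ∪ B, Or.inr rfl, ?_, ?_⟩ <;> rcases hAB with rfl | rfl <;> simp [*]
      · exact ⟨c, Or.inl ⟨hc, by simpa using hAB⟩, hx, hy⟩
    · exact ⟨A ∪ B, Or.inr rfl, hxy⟩

theorem union_notMem_classes {r : Setoid α} {A B : Set α} (hA : A ∈ r.classes)
    (hB : B ∈ r.classes) (hAB : A ≠ B) : A ∪ B ∉ r.classes := by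
  intro hC
  obtain ⟨a, ha⟩ := nonempty_of_mem_partition (isPartition_classes r) hA
  obtain ⟨b, hb⟩ := nonempty_of_mem_partition (isPartition_classes r) hB
  exact hAB ((eq_of_mem_classes hA ha hC (Or.inl ha)).trans
    (eq_of_mem_classes hB hb hC (Or.inr hb)).symm)

end Setoid

theorem Set.ncard_merge {β : Type*} {S : Set β} (hS : S.Finite) {A B C : β}
    (hA : A ∈ S) (hB : B ∈ S) (hAB : A ≠ B) (hC : C ∉ S) :
    ((S \ {A, B}) ∪ {C}).ncard + 1 = S.ncard := by
  have hpair : ({A, B} : Set β) ⊆ S := Set.insert_subset hA (Set.singleton_subset_iff.2 hB)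
  have htwo : 2 ≤ S.ncard := Set.ncard_pair hAB ▸ Set.ncard_le_ncard hpair hS
  rw [Set.union_singleton, Set.ncard_insert_of_notMem (fun h => hC h.1) hS.sdiff,
    Set.ncard_sdiff hpair, Set.ncard_pair hAB]
  omega

section PartitionLattice

variable {n : ℕ}

theorem minOf_singleton (j : Fin n) : minOf {j} = (j : ℕ) + 1 := by
  simp [minOf]

theorem exists_mem_minOf_eq {A : Set (Fin n)} (hA : A.Nonempty) :
    ∃ a ∈ A, minOf A = (a : ℕ) + 1 := by
  obtain ⟨a, ha, he⟩ := Nat.sInf_mem (hA.image fun x : Fin n => (x : ℕ) + 1)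
  exact ⟨a, ha, he.symm⟩

theorem minOf_setOf_le (hn : 0 < n) (i : ℕ) : minOf {x : Fin n | (x : ℕ) ≤ i} = 1 := by
  have hzero : (⟨0, hn⟩ : Fin n) ∈ {x : Fin n | (x : ℕ) ≤ i} := Nat.zero_le i
  have hle : minOf {x : Fin n | (x : ℕ) ≤ i} ≤ 1 := Nat.sInf_le ⟨_, hzero, rfl⟩
  obtain ⟨a, -, ha⟩ := exists_mem_minOf_eq ⟨_, hzero⟩
  omega

theorem IsBjLabel.mem_Icc {l m : Setoid (Fin n)} {k : ℕ} (h : IsBjLabel l m k) :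
    k ∈ Set.Icc 2 n := by
  obtain ⟨A, B, hA, hB, hAB, -, rfl⟩ := h
  have hne {s : Set (Fin n)} (hs : s ∈ l.classes) : s.Nonempty :=
    Setoid.nonempty_of_mem_partition l.isPartition_classes hs
  obtain ⟨a, haA, ha⟩ := exists_mem_minOf_eq (hne hA)
  obtain ⟨b, hbB, hb⟩ := exists_mem_minOf_eq (hne hB)
  have hab : (a : ℕ) ≠ b := fun h => hAB (Setoid.eq_of_mem_classes hA haA hB (Fin.ext h ▸ hbB))
  have := a.isLt
  have := b.isLt
  simp only [Set.mem_Icc, ha, hb]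
  omega

theorem IsBjLabel.ncard_classes {l m : Setoid (Fin n)} {k : ℕ} (h : IsBjLabel l m k) :
    l.classes.ncard = m.classes.ncard + 1 := by
  obtain ⟨A, B, hA, hB, hAB, hm, -⟩ := h
  rw [hm, Set.ncard_merge (Set.toFinite _) hA hB hAB (Setoid.union_notMem_classes hA hB hAB)]

theorem LabelSeq.mem_Icc {c : List (Setoid (Fin n))} {ks : List ℕ} (h : LabelSeq c ks) :
    ∀ k ∈ ks, k ∈ Set.Icc 2 n := by
  induction h with
  | nil => simp
  | single => simp
  | cons hlabel _ ih => exact List.forall_mem_cons.2 ⟨hlabel.mem_Icc, ih⟩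

theorem LabelSeq.ncard_classes {c : List (Setoid (Fin n))} {ks : List ℕ} (h : LabelSeq c ks)
    {x y : Setoid (Fin n)} (hx : c.head? = some x) (hy : c.getLast? = some y) :
    x.classes.ncard = y.classes.ncard + ks.length := by
  induction h generalizing x with
  | nil => simp at hx
  | single => simp_all
  | cons hlabel _ ih =>
    simp only [List.head?_cons, Option.some.injEq, List.getLast?_cons_cons] at hx hy
    subst hx
    rw [hlabel.ncard_classes, ih rfl hy, List.length_cons]
    ring

theorem LabelSeq.eq_range'_of_pairwise_lt (hn : 0 < n) {c : List (Setoid (Fin n))}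
    {ks : List ℕ} (h : LabelSeq c ks) (hbot : c.head? = some ⊥) (htop : c.getLast? = some ⊤)
    (hks : ks.Pairwise (· < ·)) : ks = List.range' 2 (n - 1) := by
  have : Nonempty (Fin n) := ⟨⟨0, hn⟩⟩
  have hlen : ks.length = n - 1 := by
    have := h.ncard_classes hbot htop
    rw [Setoid.ncard_classes_bot, Setoid.ncard_classes_top, Nat.card_eq_fintype_card,
      Fintype.card_fin] at this
    omega
  rw [← hlen]
  refine List.eq_range'_of_pairwise_lt hks fun k hk => ?_
  have := h.mem_Icc k hk
  simp only [Set.mem_Icc] at this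
  omega

theorem initSetoid_rel {i : ℕ} {x y : Fin n} :
    initSetoid n i x y ↔ x = y ∨ ((x : ℕ) ≤ i ∧ (y : ℕ) ≤ i) :=
  Iff.rfl

theorem mem_classes_initSetoid {i : ℕ} {s : Set (Fin n)} (hs : s ∈ (initSetoid n i).classes) :
    s = {x : Fin n | (x : ℕ) ≤ i} ∨ ∃ j : Fin n, i < j ∧ s = {j} := by
  obtain ⟨y, rfl⟩ := hs
  by_cases hy : (y : ℕ) ≤ i
  · left
    ext x
    simp only [Set.mem_ofPred_eq, initSetoid_rel]
    constructor
    · rintro (rfl | ⟨hx, -⟩) <;> assumption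
    · exact fun hx => Or.inr ⟨hx, hy⟩
  · right
    refine ⟨y, by omega, ?_⟩
    ext x
    simp only [Set.mem_ofPred_eq, Set.mem_singleton_iff, initSetoid_rel, Fin.ext_iff]
    omega

theorem union_eq_of_mem_classes_initSetoid {i : ℕ} (hi : i + 1 < n) {A B : Set (Fin n)}
    (hA : A ∈ (initSetoid n i).classes) (hB : B ∈ (initSetoid n i).classes) (hAB : A ≠ B)
    (hk : i + 2 = max (minOf A) (minOf B)) : A ∪ B = {x : Fin n | (x : ℕ) ≤ i + 1} := by
  have hL := minOf_setOf_le (n := n) (by omega) i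
  have hLj (j : Fin n) (hj : (j : ℕ) = i + 1) :
      {x : Fin n | (x : ℕ) ≤ i} ∪ {j} = {x : Fin n | (x : ℕ) ≤ i + 1} := by
    ext x
    simp only [Set.mem_union, Set.mem_ofPred_eq, Set.mem_singleton_iff, Fin.ext_iff]
    omega
  -- The blocks are `{0, …, i}`, with minimum `1`, and singletons `{j}`, `j > i`, with minimum
  -- `j + 1`; a merge labelled `i + 2` must join `{0, …, i}` with `{i + 1}`.
  rcases mem_classes_initSetoid hA with rfl | ⟨a, ha, rfl⟩ <;>
    rcases mem_classes_initSetoid hB with rfl | ⟨b, hb, rfl⟩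
  · exact absurd rfl hAB
  · rw [hL, minOf_singleton] at hk
    exact hLj b (by omega)
  · rw [hL, minOf_singleton] at hk
    exact Set.union_comm _ _ ▸ hLj a (by omega)
  · rw [minOf_singleton, minOf_singleton] at hk
    exact absurd (congrArg _ (Fin.ext (by omega))) hAB

theorem IsBjLabel.eq_initSetoid_succ {i : ℕ} (hi : i + 1 < n) {y : Setoid (Fin n)}
    (h : IsBjLabel (initSetoid n i) y (i + 2)) : y = initSetoid n (i + 1) := by
  obtain ⟨A, B, hA, hB, hAB, hy, hk⟩ := h
  ext x z
  rw [Setoid.rel_iff_of_classes_eq_merge hy, union_eq_of_mem_classes_initSetoid hi hA hB hAB hk,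
    initSetoid_rel, initSetoid_rel]
  simp only [Set.mem_ofPred_eq]
  omega

theorem initSetoid_zero : initSetoid n 0 = ⊥ := by
  ext x y
  rw [initSetoid_rel, Setoid.bot_def, Fin.ext_iff]
  omega

theorem LabelSeq.eq_map_initSetoid {m i : ℕ} {c : List (Setoid (Fin n))} (hi : i + m < n)
    (h : LabelSeq (initSetoid n i :: c) (List.range' (i + 2) m)) :
    initSetoid n i :: c = (List.range' i (m + 1)).map (initSetoid n) := by
  induction m generalizing i c with
  | zero =>
    cases h
    rfl
  | succ m ih =>
    rw [List.range'_succ] at h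
    cases h with
    | cons hlabel htail =>
      rw [hlabel.eq_initSetoid_succ (by omega)] at htail ⊢
      rw [List.range'_succ, List.map_cons, ih (by omega) htail]

end PartitionLattice

/-- In Björner's EL-labelling of the partition lattice, the unique increasing
maximal chain from the discrete partition to the full one-block partition
is `({1},…,{n}) ⋖ ({1,2},{3},…,{n}) ⋖ ({1,2,3},{4},…,{n}) ⋖ ⋯ ⋖ {1,…,n}`,
obtained by successively merging the two blocks with smallest minima. -/
theorem stmt3 (n : ℕ) (hn : 1 ≤ n) (c : List (Setoid (Fin n)))
    (hc : IsSatChain (⊥ : Setoid (Fin n)) ⊤ c)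
    (hinc : ∃ ks : List ℕ, LabelSeq c ks ∧ ks.Pairwise (· < ·)) :
    c = (List.range n).map (initSetoid n) := by
  obtain ⟨-, hbot, htop⟩ := hc
  obtain ⟨ks, hlabels, hks⟩ := hinc
  rw [hlabels.eq_range'_of_pairwise_lt hn hbot htop hks] at hlabels
  obtain ⟨c, rfl⟩ := List.head?_eq_some_iff.1 hbot
  rw [← initSetoid_zero] at hlabels ⊢
  rw [hlabels.eq_map_initSetoid (i := 0) (by omega), Nat.sub_add_cancel hn, List.range_eq_range']
end

section
/- The labelling of the pointed partition poset sending the edge that merges blocks A_i and A_j (in a pointed partition with p blocks of {1,...,n}) to the pair (max(min A_i, min A_j), a + n - p) — where a is the minimum of the block whose pointed element is NOT chosen as the pointed element of A_i ∪ A_j — ordered lexicographically, is an EL-labelling of every maximal interval of the pointed partition poset: each such interval has a unique maximal chain with strictly increasing label sequence, and that sequence is lexicographically least. -/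
/-- A pointed partition of `Fin n`. -/
structure PtPartition (n : ℕ) where
  sd : Setoid (Fin n)
  pt : Fin n → Fin n
  pt_rel : ∀ x, sd.r (pt x) x
  pt_eq : ∀ x y, sd.r x y → pt x = pt y

def PtLE {n : ℕ} (a b : PtPartition n) : Prop :=
  a.sd ≤ b.sd ∧ ∀ x, a.pt (b.pt x) = b.pt x

def PtLT {n : ℕ} (a b : PtPartition n) : Prop := PtLE a b ∧ ¬ PtLE b a

def PtCovBy {n : ℕ} (a b : PtPartition n) : Prop :=
  PtLT a b ∧ ∀ c, PtLT a c → ¬ PtLT c b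

/-- The label `(max (min Aᵢ) (min Aⱼ), a + n - p)` of the edge merging the
blocks `A` and `B` of the pointed partition `l` (with `p` blocks): `a` is the
minimum of the block whose pointed element is NOT chosen as the pointed
element of `A ∪ B`. -/
noncomputable def IsPtLabel {n : ℕ} (l m : PtPartition n) (k : ℕ × ℕ) : Prop :=
  ∃ A B : Set (Fin n), A ∈ l.sd.classes ∧ B ∈ l.sd.classes ∧ A ≠ B ∧
    m.sd.classes = (l.sd.classes \ {A, B}) ∪ {A ∪ B} ∧
    (∀ x : Fin n, x ∉ A ∪ B → m.pt x = l.pt x) ∧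
    (((∀ x ∈ A ∪ B, ∀ a ∈ A, m.pt x = l.pt a) ∧
        k = (max (minOf A) (minOf B), minOf B + n - l.sd.classes.ncard)) ∨
      ((∀ x ∈ A ∪ B, ∀ b ∈ B, m.pt x = l.pt b) ∧
        k = (max (minOf A) (minOf B), minOf A + n - l.sd.classes.ncard)))

/-- A saturated chain from `x` to `y` in the pointed partition poset. -/
def PtSatChain {n : ℕ} (x y : PtPartition n) (c : List (PtPartition n)) : Prop :=
  c.Chain' PtCovBy ∧ c.head? = some x ∧ c.getLast? = some y

/-- Label sequence of a chain in the pointed partition poset. -/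
inductive PtLabelSeq {n : ℕ} : List (PtPartition n) → List (ℕ × ℕ) → Prop
  | nil : PtLabelSeq [] []
  | single (x : PtPartition n) : PtLabelSeq [x] []
  | cons {x y : PtPartition n} {rest : List (PtPartition n)} {k : ℕ × ℕ} {ks : List (ℕ × ℕ)} :
      IsPtLabel x y k → PtLabelSeq (y :: rest) ks → PtLabelSeq (x :: y :: rest) (k :: ks)

/-!
Write `segment M t` for the pointed partition whose only non-singleton block is `{0, …, t}`,
pointed at `min t M`. The segments form a saturated chain from the discrete pointed partition to
the single block pointed at `M`; its step at `t` merges `{0, …, t}` with `{t + 1}` and carries a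
label `(t + 2, _)` (minima are counted from `1`, as in `minOf`). Any other edge out of
`segment M t` that stays below the top either merges two blocks whose larger minimum exceeds
`t + 2`, or merges the same two blocks but keeps the point `t` although `t < M`, which costs the
label `(t + 2, 2 t + 2)` instead of `(t + 2, t + 1)`. By induction along a chain, every maximal
chain other than the segment chain has a lexicographically larger label sequence, while the
labels of the segment chain increase.
-/

namespace Setoid

variable {α : Type*} {r s : Setoid α} {K L : Set α}

theorem classes_eq_merge_iff (hK : K ∈ r.classes) (hL : L ∈ r.classes) :
    s.classes = (r.classes \ {K, L}) ∪ {K ∪ L} ↔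
      ∀ x y, s x y ↔ r x y ∨ (x ∈ K ∪ L ∧ y ∈ K ∪ L) := by
  have hclass : ∀ {C}, C ∈ r.classes → ∀ {y}, y ∈ C → C = {x | r x y} := fun hC _ hy =>
    eq_of_mem_classes hC hy (mem_classes r _) (r.refl' _)
  constructor
  · intro h x y
    rw [rel_iff_exists_classes, h]
    constructor
    · rintro ⟨c, ⟨hc, -⟩ | rfl, hx, hy⟩
      · exact Or.inl (rel_iff_exists_classes r |>.2 ⟨c, hc, hx, hy⟩)
      · exact Or.inr ⟨hx, hy⟩
    · rintro (hxy | hxy)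
      · obtain ⟨c, hc, hx, hy⟩ := (rel_iff_exists_classes r).1 hxy
        by_cases hcKL : c = K ∨ c = L
        · refine ⟨K ∪ L, Or.inr rfl, ?_, ?_⟩ <;>
            rcases hcKL with rfl | rfl <;> simp [hx, hy]
        · exact ⟨c, Or.inl ⟨hc, by simpa using hcKL⟩, hx, hy⟩
      · exact ⟨K ∪ L, Or.inr rfl, hxy⟩
  · intro h
    have hin : ∀ y ∈ K ∪ L, {x | s x y} = K ∪ L := by
      intro y hy
      ext x
      simp only [Set.mem_ofPred_eq, h]
      refine ⟨?_, fun hx => Or.inr ⟨hx, hy⟩⟩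
      rintro (hxy | ⟨hx, -⟩)
      · rcases hy with hy | hy
        · exact Or.inl (hclass hK hy ▸ hxy)
        · exact Or.inr (hclass hL hy ▸ hxy)
      · exact hx
    have hout : ∀ y ∉ K ∪ L, {x | s x y} = {x | r x y} := by
      intro y hy
      ext x
      simp [h, hy]
    ext S
    constructor
    · rintro ⟨y, rfl⟩
      by_cases hy : y ∈ K ∪ L
      · exact Or.inr (hin y hy)
      · refine Or.inl ⟨(hout y hy).symm ▸ mem_classes r y, fun hS => hy ?_⟩
        have hyS : y ∈ {x | s x y} := s.refl' y
        simp only [Set.mem_insert_iff, Set.mem_singleton_iff] at hS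
        rcases hS with hS | hS <;> rw [hS] at hyS <;> simp [hyS]
    · rintro (⟨⟨y, rfl⟩, hne⟩ | rfl)
      · have hy : y ∉ K ∪ L := by
          rintro (hy | hy)
          · exact hne (Or.inl (hclass hK hy).symm)
          · exact hne (Or.inr (hclass hL hy).symm)
        exact ⟨y, (hout y hy).symm⟩
      · obtain ⟨a, rfl⟩ := hK
        exact ⟨a, (hin a (Or.inl (r.refl' a))).symm⟩

end Setoid

theorem List.IsChain.le_of_getLast?_eq_some {α : Type*} [Preorder α] {x z : α} {l : List α}
    (h : (x :: l).IsChain (· ≤ ·)) (hz : (x :: l).getLast? = some z) : x ≤ z := by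
  rcases List.mem_cons.1 (List.mem_of_getLast? hz) with rfl | hz
  · exact le_rfl
  · exact h.rel_cons hz

namespace PtPartition

variable {n : ℕ}

theorem ext_of_sd_pt {a b : PtPartition n} (hsd : a.sd = b.sd) (hpt : a.pt = b.pt) : a = b := by
  cases a; cases b; cases hsd; cases hpt; rfl

theorem eq_of_ptLE_of_sd_eq {a b : PtPartition n} (h : PtLE a b) (hsd : a.sd = b.sd) : a = b :=
  ext_of_sd_pt hsd <| funext fun x =>
    (a.pt_eq _ _ (hsd ▸ b.pt_rel x)).symm.trans (h.2 x)

instance : PartialOrder (PtPartition n) where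
  le := PtLE
  lt := PtLT
  le_refl a := ⟨le_rfl, fun x => a.pt_eq _ _ (a.pt_rel x)⟩
  le_trans _ _ _ hab hbc := ⟨hab.1.trans hbc.1, fun x => by rw [← hbc.2 x, hab.2]⟩
  lt_iff_le_not_ge _ _ := Iff.rfl
  le_antisymm _ _ hab hba := eq_of_ptLE_of_sd_eq hab (le_antisymm hab.1 hba.1)

theorem covBy_of_sd_covBy {a b : PtPartition n} (hab : a ≤ b) (h : a.sd ⋖ b.sd) : a ⋖ b := by
  refine ⟨hab.lt_of_ne fun e => h.ne (congrArg sd e), fun c hac hcb => ?_⟩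
  rcases h.eq_or_eq hac.le.1 hcb.le.1 with e | e
  · exact hac.ne (eq_of_ptLE_of_sd_eq hac.le e.symm)
  · exact hcb.ne (eq_of_ptLE_of_sd_eq hcb.le e)

end PtPartition

namespace PtSatChain

variable {n : ℕ} {x y z : PtPartition n} {c : List (PtPartition n)}

theorem le (h : PtSatChain x z c) : x ≤ z := by
  obtain ⟨hch, hhead, hlast⟩ := h
  obtain ⟨c, rfl⟩ := List.head?_eq_some_iff.1 hhead
  exact List.IsChain.le_of_getLast?_eq_some (hch.imp fun _ _ h => CovBy.le h) hlast

theorem cons (hxy : x ⋖ y) (h : PtSatChain y z c) : PtSatChain x z (x :: c) := by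
  obtain ⟨hch, hhead, hlast⟩ := h
  obtain ⟨c, rfl⟩ := List.head?_eq_some_iff.1 hhead
  exact ⟨hch.cons_cons hxy, rfl, by rwa [List.getLast?_cons_cons]⟩

theorem of_cons_cons {x' : PtPartition n} (h : PtSatChain x z (x' :: y :: c)) :
    x' = x ∧ x ⋖ y ∧ PtSatChain y z (y :: c) := by
  obtain ⟨hch, hhead, hlast⟩ := h
  obtain rfl : x' = x := Option.some_injective _ hhead
  exact ⟨rfl, hch.rel, hch.tail, rfl, by rwa [List.getLast?_cons_cons] at hlast⟩

theorem eq_singleton (h : PtSatChain x x c) : c = [x] := by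
  obtain ⟨c, rfl⟩ := List.head?_eq_some_iff.1 h.2.1
  cases c with
  | nil => rfl
  | cons y c =>
    obtain ⟨-, hxy, hy⟩ := h.of_cons_cons
    exact absurd (hxy.lt.trans_le hy.le) (lt_irrefl x)

end PtSatChain

def HasUniqueELChain {n : ℕ} (x y : PtPartition n) : Prop :=
  ∃! c : List (PtPartition n),
    PtSatChain x y c ∧
    (∃ ks : List (ℕ × ℕ), PtLabelSeq c ks ∧ ks.Pairwise (Prod.Lex (· < ·) (· < ·))) ∧
    (∀ c' ks ks', PtSatChain x y c' → PtLabelSeq c ks → PtLabelSeq c' ks' →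
      ks = ks' ∨ List.Lex (Prod.Lex (· < ·) (· < ·)) ks ks')

theorem hasUniqueELChain_self {n : ℕ} (x : PtPartition n) : HasUniqueELChain x x := by
  refine ⟨[x], ⟨⟨List.isChain_singleton x, rfl, rfl⟩, ⟨[], .single x, .nil⟩, ?_⟩,
    fun c hc => hc.1.eq_singleton⟩
  rintro c' ks ks' - ⟨⟩ -
  exact (List.lex_nil_or_eq_nil ks').symm.imp Eq.symm id

namespace PtPartition

variable {n : ℕ}

/-- The partition of `Fin n` into `{0, …, t}` and singletons. -/
def initSegSetoid (n t : ℕ) : Setoid (Fin n) := Setoid.ker fun x => max (x : ℕ) t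

@[simp]
theorem initSegSetoid_rel {t : ℕ} {x y : Fin n} :
    initSegSetoid n t x y ↔ max (x : ℕ) t = max (y : ℕ) t := Iff.rfl

theorem initSegSetoid_zero : initSegSetoid n 0 = ⊥ :=
  Setoid.ext fun x y => by simp [Fin.val_inj]

theorem initSegSetoid_pred : initSegSetoid n (n - 1) = ⊤ :=
  Setoid.ext fun x y => iff_of_true (by simp only [initSegSetoid_rel]; omega) trivial

theorem initSegSetoid_covBy {t : ℕ} (ht : t + 1 < n) :
    initSegSetoid n t ⋖ initSegSetoid n (t + 1) := by
  have h0 : 0 < n := by omega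
  have hle : initSegSetoid n t ≤ initSegSetoid n (t + 1) :=
    Setoid.le_def.2 fun {x y} h => by simp only [initSegSetoid_rel] at h ⊢; omega
  have hnle : ¬ initSegSetoid n (t + 1) ≤ initSegSetoid n t := fun h => by
    have := Setoid.le_def.1 h (x := ⟨0, h0⟩) (y := ⟨t + 1, ht⟩) (by simp)
    simp at this
  refine covBy_iff_lt_and_eq_or_eq.2 ⟨lt_of_le_not_ge hle hnle, fun c hlo hhi => ?_⟩
  have hlo' : ∀ z : Fin n, (z : ℕ) ≤ t → c z ⟨0, h0⟩ := fun z hz =>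
    Setoid.le_def.1 hlo (by simp only [initSegSetoid_rel]; omega)
  by_cases hc : c ⟨t + 1, ht⟩ ⟨0, h0⟩
  · have hbig : ∀ z : Fin n, (z : ℕ) ≤ t + 1 → c z ⟨0, h0⟩ := fun z hz => by
      rcases Nat.lt_or_ge (z : ℕ) (t + 1) with hz' | hz'
      · exact hlo' z (by omega)
      · rwa [show z = ⟨t + 1, ht⟩ from Fin.ext (by simp; omega)]
    refine Or.inr (le_antisymm hhi (Setoid.le_def.2 fun {x y} h => ?_))
    simp only [initSegSetoid_rel] at h
    by_cases hx : (x : ℕ) ≤ t + 1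
    · exact c.trans' (hbig x hx) (c.symm' (hbig y (by omega)))
    · obtain rfl : x = y := Fin.ext (by omega)
      exact c.refl' x
  · refine Or.inl (le_antisymm (Setoid.le_def.2 fun {x y} h => ?_) hlo)
    have hxy := Setoid.le_def.1 hhi h
    simp only [initSegSetoid_rel] at hxy ⊢
    by_contra hne
    have hsucc : ∀ {u v : Fin n}, c u v → (u : ℕ) = t + 1 → (v : ℕ) ≤ t → False :=
      fun {u v} huv hu hv => hc <| by
        rw [show u = ⟨t + 1, ht⟩ from Fin.ext hu] at huv
        exact c.trans' huv (hlo' v hv)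
    rcases Nat.lt_or_ge (x : ℕ) (y : ℕ) with hlt | hge
    · exact hsucc (c.symm' h) (by omega) (by omega)
    · exact hsucc h (by omega) (by omega)

theorem ncard_classes_initSegSetoid {t : ℕ} (ht : t < n) :
    (initSegSetoid n t).classes.ncard = n - t := by
  have hrange : Set.range (fun x : Fin n => max (x : ℕ) t) = Set.Ico t n := by
    ext m
    simp only [Set.mem_range, Set.mem_Ico]
    refine ⟨?_, fun hm => ⟨⟨m, hm.2⟩, by simp; omega⟩⟩
    rintro ⟨x, rfl⟩
    exact ⟨le_max_right _ _, max_lt x.isLt ht⟩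
  have hquot : Nat.card (Quotient (initSegSetoid n t)) =
      Nat.card (Set.range fun x : Fin n => max (x : ℕ) t) :=
    Nat.card_congr (Setoid.quotientKerEquivRange _)
  rw [← Nat.card_coe_set_eq, ← Nat.card_congr (Setoid.quotientEquivClasses _), hquot,
    Nat.card_coe_set_eq, hrange, Set.ncard_Ico_nat]

theorem minOf_eq {A : Set (Fin n)} {m : Fin n} (hm : m ∈ A) (hmin : ∀ a ∈ A, m ≤ a) :
    minOf A = (m : ℕ) + 1 :=
  IsLeast.csInf_eq ⟨⟨m, hm, rfl⟩, by rintro _ ⟨a, ha, rfl⟩; simpa using hmin a ha⟩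

theorem minOf_initSegSetoid_class {t : ℕ} (a : Fin n) :
    minOf {x | initSegSetoid n t x a} = if (a : ℕ) ≤ t then 1 else (a : ℕ) + 1 := by
  split_ifs with ha
  · exact minOf_eq (m := ⟨0, a.pos⟩) (by simp; omega) fun x _ => Nat.zero_le (x : ℕ)
  · exact minOf_eq (by simp) fun x hx => by simp at hx; omega

def segment (M : Fin n) (t : ℕ) : PtPartition n where
  sd := initSegSetoid n t
  pt x := if (x : ℕ) ≤ t then ⟨min t M, min_lt_of_right_lt M.isLt⟩ else x
  pt_rel x := by
    split_ifs with hx <;> simp only [initSegSetoid_rel]; omega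
  pt_eq x y h := by
    simp only [initSegSetoid_rel] at h
    split_ifs with hx hy hy
    · rfl
    · omega
    · omega
    · exact Fin.ext (by omega)

@[simp]
theorem segment_sd (M : Fin n) (t : ℕ) : (segment M t).sd = initSegSetoid n t := rfl

@[simp]
theorem segment_sd_rel {M : Fin n} {t : ℕ} {x y : Fin n} :
    (segment M t).sd x y ↔ max (x : ℕ) t = max (y : ℕ) t := Iff.rfl

theorem val_segment_pt (M : Fin n) (t : ℕ) (x : Fin n) :
    ((segment M t).pt x : ℕ) = if (x : ℕ) ≤ t then min t (M : ℕ) else x := by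
  simp only [segment]
  split_ifs <;> rfl

theorem segment_pt_self (M : Fin n) (t : ℕ) : (segment M t).pt M = M :=
  Fin.ext (by rw [val_segment_pt]; split_ifs <;> omega)

theorem eq_segment {y : PtPartition n} {M : Fin n} {s : ℕ} (hsd : y.sd = initSegSetoid n s)
    {x₀ : Fin n} (hx₀ : (x₀ : ℕ) ≤ s) (hpt : (y.pt x₀ : ℕ) = min s M) : y = segment M s := by
  refine ext_of_sd_pt hsd (funext fun x => Fin.ext ?_)
  rw [val_segment_pt]
  split_ifs with hx
  · rw [y.pt_eq x x₀ (by rw [hsd, initSegSetoid_rel]; omega), hpt]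
  · have := y.pt_rel x
    rw [hsd, initSegSetoid_rel] at this
    omega

theorem segment_le_succ (M : Fin n) (t : ℕ) : segment M t ≤ segment M (t + 1) :=
  ⟨Setoid.le_def.2 fun {x y} h => by simp only [segment_sd_rel] at h ⊢; omega,
   fun x => Fin.ext (by simp only [val_segment_pt]; split_ifs <;> omega)⟩

theorem segment_covBy {M : Fin n} {t : ℕ} (ht : t + 1 < n) : segment M t ⋖ segment M (t + 1) :=
  covBy_of_sd_covBy (segment_le_succ M t) (initSegSetoid_covBy ht)

theorem eq_segment_zero {l : PtPartition n} (h : l.sd = ⊥) (M : Fin n) : l = segment M 0 := by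
  refine eq_segment (h.trans initSegSetoid_zero.symm) (x₀ := ⟨0, M.pos⟩) le_rfl ?_
  have := l.pt_rel ⟨0, M.pos⟩
  rw [h, Setoid.bot_def] at this
  simp [this]

theorem eq_segment_pred {w : PtPartition n} (h : w.sd = ⊤) (x : Fin n) :
    w = segment (w.pt x) (n - 1) :=
  eq_segment (h.trans initSegSetoid_pred.symm) (x₀ := x) (by omega) (by omega)

theorem monotone_segment (M : Fin n) : Monotone (segment M) :=
  monotone_nat_of_le_succ (segment_le_succ M)

structure IsMerge (l m : PtPartition n) (K L : Set (Fin n)) : Prop where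
  left_mem : K ∈ l.sd.classes
  right_mem : L ∈ l.sd.classes
  ne : K ≠ L
  classes_eq : m.sd.classes = (l.sd.classes \ {K, L}) ∪ {K ∪ L}
  pt_of_notMem : ∀ x, x ∉ K ∪ L → m.pt x = l.pt x
  pt_of_mem : ∀ x ∈ K ∪ L, ∀ a ∈ K, m.pt x = l.pt a

theorem IsMerge.rel_iff {l m : PtPartition n} {K L : Set (Fin n)} (h : IsMerge l m K L)
    (x y : Fin n) : m.sd x y ↔ l.sd x y ∨ (x ∈ K ∪ L ∧ y ∈ K ∪ L) :=
  (Setoid.classes_eq_merge_iff h.left_mem h.right_mem).1 h.classes_eq x y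

theorem isPtLabel_iff {l m : PtPartition n} {k : ℕ × ℕ} :
    IsPtLabel l m k ↔ ∃ K L, IsMerge l m K L ∧
      k = (max (minOf K) (minOf L), minOf L + n - l.sd.classes.ncard) := by
  constructor
  · rintro ⟨A, B, hA, hB, hAB, hcl, hout, ⟨hpt, rfl⟩ | ⟨hpt, rfl⟩⟩
    · exact ⟨A, B, ⟨hA, hB, hAB, hcl, hout, hpt⟩, rfl⟩
    · rw [Set.union_comm A B] at hcl hout hpt
      rw [Set.pair_comm] at hcl
      exact ⟨B, A, ⟨hB, hA, hAB.symm, hcl, hout, hpt⟩, by rw [max_comm]⟩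
  · rintro ⟨K, L, hm, rfl⟩
    exact ⟨K, L, hm.left_mem, hm.right_mem, hm.ne, hm.classes_eq, hm.pt_of_notMem,
      Or.inl ⟨hm.pt_of_mem, rfl⟩⟩

theorem initSegSetoid_succ_rel_iff {t : ℕ} {a b : Fin n}
    (hab : (a : ℕ) ≤ t ∧ (b : ℕ) = t + 1 ∨ (a : ℕ) = t + 1 ∧ (b : ℕ) ≤ t) (x y : Fin n) :
    initSegSetoid n (t + 1) x y ↔ initSegSetoid n t x y ∨
      (x ∈ {z | initSegSetoid n t z a} ∪ {z | initSegSetoid n t z b} ∧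
        y ∈ {z | initSegSetoid n t z a} ∪ {z | initSegSetoid n t z b}) := by
  simp only [Set.mem_union, Set.mem_ofPred_eq, initSegSetoid_rel]
  omega

theorem isMerge_segment_succ {M : Fin n} {t : ℕ} {a b : Fin n}
    (hab : (a : ℕ) ≤ t ∧ (b : ℕ) = t + 1 ∨ (a : ℕ) = t + 1 ∧ (b : ℕ) ≤ t)
    (hpt : (segment M (t + 1)).pt a = (segment M t).pt a) :
    IsMerge (segment M t) (segment M (t + 1))
      {z | initSegSetoid n t z a} {z | initSegSetoid n t z b} := by
  refine ⟨Setoid.mem_classes _ a, Setoid.mem_classes _ b, fun h => ?_, ?_, fun x hx => ?_,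
    fun x hx a' ha' => ?_⟩
  · have : b ∈ {z | initSegSetoid n t z a} := by rw [h]; exact (initSegSetoid n t).refl' b
    simp only [Set.mem_ofPred_eq, initSegSetoid_rel] at this
    omega
  · exact (Setoid.classes_eq_merge_iff (Setoid.mem_classes _ a) (Setoid.mem_classes _ b)).2
      (initSegSetoid_succ_rel_iff hab)
  · simp only [Set.mem_union, Set.mem_ofPred_eq, initSegSetoid_rel] at hx
    exact Fin.ext (by simp only [val_segment_pt]; split_ifs <;> omega)
  · rw [← (segment M t).pt_eq a a' (Setoid.symm' _ ha'), ← hpt]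
    exact (segment M (t + 1)).pt_eq _ _ (by
      simp only [Set.mem_union, Set.mem_ofPred_eq, initSegSetoid_rel] at hx
      simp only [segment_sd_rel]
      omega)

/-- The label of `segment M t ⋖ segment M (t + 1)`: the step merges `{0, …, t}` (whose `minOf` is
`1`) with `{t + 1}` (whose `minOf` is `t + 2`) in a partition with `n - t` blocks, and the point
moves to `t + 1` exactly when `t < M`. -/
def canonLabel (M : Fin n) (t : ℕ) : ℕ × ℕ :=
  (t + 2, if t < (M : ℕ) then t + 1 else 2 * t + 2)

theorem isPtLabel_segment_succ {M : Fin n} {t : ℕ} (ht : t + 1 < n) :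
    IsPtLabel (segment M t) (segment M (t + 1)) (canonLabel M t) := by
  have h0 : 0 < n := by omega
  have hcard : (segment M t).sd.classes.ncard = n - t :=
    ncard_classes_initSegSetoid (by omega)
  refine isPtLabel_iff.2 ?_
  by_cases hM : t < (M : ℕ)
  · refine ⟨_, _, isMerge_segment_succ (a := ⟨t + 1, ht⟩) (b := ⟨0, h0⟩) (by simp) ?_, ?_⟩
    · exact Fin.ext (by simp only [val_segment_pt]; split_ifs <;> omega)
    · simp only [minOf_initSegSetoid_class, hcard, canonLabel, if_pos hM, Prod.mk.injEq]
      split_ifs <;> omega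
  · refine ⟨_, _, isMerge_segment_succ (a := ⟨0, h0⟩) (b := ⟨t + 1, ht⟩) (by simp) ?_, ?_⟩
    · exact Fin.ext (by simp only [val_segment_pt]; split_ifs <;> omega)
    · simp only [minOf_initSegSetoid_class, hcard, canonLabel, if_neg hM, Prod.mk.injEq]
      split_ifs <;> omega

theorem IsMerge.sd_eq_succ_of_adjacent {M : Fin n} {t : ℕ} {y : PtPartition n} {a b : Fin n}
    (hm : IsMerge (segment M t) y {x | initSegSetoid n t x a} {x | initSegSetoid n t x b})
    (hadj : (a : ℕ) ≤ t ∧ (b : ℕ) = t + 1 ∨ (a : ℕ) = t + 1 ∧ (b : ℕ) ≤ t) :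
    y.sd = initSegSetoid n (t + 1) :=
  Setoid.ext fun x z => by
    rw [hm.rel_iff, initSegSetoid_succ_rel_iff hadj]
    rfl

theorem IsMerge.ne_segment_succ {M : Fin n} {t : ℕ} {y : PtPartition n} {a b : Fin n}
    (ht : t + 1 < n)
    (hm : IsMerge (segment M t) y {x | initSegSetoid n t x a} {x | initSegSetoid n t x b})
    (hadj : ¬((a : ℕ) ≤ t ∧ (b : ℕ) = t + 1 ∨ (a : ℕ) = t + 1 ∧ (b : ℕ) ≤ t)) :
    y ≠ segment M (t + 1) := fun he => by
  have := (hm.rel_iff ⟨0, by omega⟩ ⟨t + 1, ht⟩).1 (by subst he; simp)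
  simp only [segment_sd_rel, initSegSetoid_rel, Set.mem_union, Set.mem_ofPred_eq] at this
  omega

theorem isPtLabel_segment_eq_or_lt {M : Fin n} {t : ℕ} (ht : t + 1 < n) {y : PtPartition n}
    {k : ℕ × ℕ} (hk : IsPtLabel (segment M t) y k) (hyM : y.pt M = M) :
    (k = canonLabel M t ∧ y = segment M (t + 1)) ∨
      (Prod.Lex (· < ·) (· < ·) (canonLabel M t) k ∧ y ≠ segment M (t + 1)) := by
  obtain ⟨K, L, hm, rfl⟩ := isPtLabel_iff.1 hk
  obtain ⟨a, rfl⟩ : ∃ a, K = {x | initSegSetoid n t x a} := hm.left_mem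
  obtain ⟨b, rfl⟩ : ∃ b, L = {x | initSegSetoid n t x b} := hm.right_mem
  have hab : max (a : ℕ) t ≠ max (b : ℕ) t := fun h => hm.ne (by ext x; simp [h])
  have haK : a ∈ {x | initSegSetoid n t x a} := (initSegSetoid n t).refl' a
  have hpt : (y.pt a : ℕ) = if (a : ℕ) ≤ t then min t (M : ℕ) else a := by
    rw [hm.pt_of_mem a (Or.inl haK) a haK, val_segment_pt]
  simp only [segment_sd, minOf_initSegSetoid_class,
    ncard_classes_initSegSetoid (by omega : t < n)]
  by_cases hadj : (a : ℕ) ≤ t ∧ (b : ℕ) = t + 1 ∨ (a : ℕ) = t + 1 ∧ (b : ℕ) ≤ t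
  · have hsd := hm.sd_eq_succ_of_adjacent hadj
    rcases hadj with ⟨ha, hb⟩ | ⟨ha, hb⟩
    · rw [if_pos ha] at hpt
      by_cases hM : (M : ℕ) ≤ t
      · refine Or.inl ⟨?_, eq_segment hsd (x₀ := a) (by omega) (by omega)⟩
        simp only [canonLabel, Prod.mk.injEq]
        split_ifs <;> omega
      · refine Or.inr ⟨?_, fun he => ?_⟩
        · simp only [canonLabel, Prod.lex_def]
          split_ifs <;> omega
        · rw [he, val_segment_pt, if_pos (by omega)] at hpt
          omega
    · rw [if_neg (by omega)] at hpt
      have hM : t < (M : ℕ) := by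
        by_contra hM
        have hML : M ∈ {x | initSegSetoid n t x a} ∪ {x | initSegSetoid n t x b} :=
          Or.inr (by simp only [Set.mem_ofPred_eq, initSegSetoid_rel]; omega)
        have := congrArg Fin.val (hm.pt_of_mem M hML a haK)
        rw [hyM, val_segment_pt, if_neg (by omega)] at this
        omega
      refine Or.inl ⟨?_, eq_segment hsd (x₀ := a) (by omega) (by omega)⟩
      simp only [canonLabel, Prod.mk.injEq]
      split_ifs <;> omega
  · refine Or.inr ⟨?_, hm.ne_segment_succ ht hadj⟩
    simp only [canonLabel, Prod.lex_def]
    split_ifs <;> omega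

def canonChain (M : Fin n) (t d : ℕ) : List (PtPartition n) :=
  (List.range' t (d + 1)).map (segment M)

def canonLabels (M : Fin n) (t d : ℕ) : List (ℕ × ℕ) :=
  (List.range' t d).map (canonLabel M)

theorem canonChain_succ (M : Fin n) (t d : ℕ) :
    canonChain M t (d + 1) = segment M t :: canonChain M (t + 1) d := rfl

theorem canonLabels_succ (M : Fin n) (t d : ℕ) :
    canonLabels M t (d + 1) = canonLabel M t :: canonLabels M (t + 1) d := rfl

theorem ptSatChain_canonChain {M : Fin n} :
    ∀ {t d : ℕ}, t + d < n → PtSatChain (segment M t) (segment M (t + d)) (canonChain M t d)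
  | _, 0, _ => ⟨List.isChain_singleton _, rfl, rfl⟩
  | t, d + 1, h => by
    rw [canonChain_succ, ← add_assoc, add_right_comm]
    exact (ptSatChain_canonChain (by omega)).cons (segment_covBy (by omega))

theorem ptLabelSeq_canonChain {M : Fin n} :
    ∀ {t d : ℕ}, t + d < n → PtLabelSeq (canonChain M t d) (canonLabels M t d)
  | _, 0, _ => .single _
  | _, _ + 1, h => .cons (isPtLabel_segment_succ (by omega)) (ptLabelSeq_canonChain (by omega))

theorem pairwise_canonLabels (M : Fin n) (t d : ℕ) :
    (canonLabels M t d).Pairwise (Prod.Lex (· < ·) (· < ·)) :=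
  List.pairwise_map.2 <| (List.pairwise_lt_range' (s := t) (n := d)).imp fun h =>
    Prod.Lex.left _ _ (by omega)

theorem eq_canonChain_or_lex_lt {M : Fin n} {t d : ℕ} {c : List (PtPartition n)}
    {ks : List (ℕ × ℕ)} (htd : t + d < n) (hc : PtSatChain (segment M t) (segment M (t + d)) c)
    (hks : PtLabelSeq c ks) :
    (c = canonChain M t d ∧ ks = canonLabels M t d) ∨
      (List.Lex (Prod.Lex (· < ·) (· < ·)) (canonLabels M t d) ks ∧ c ≠ canonChain M t d) := by
  induction hks generalizing t d with
  | nil => simp [PtSatChain] at hc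
  | single x =>
    obtain ⟨-, hhead, hlast⟩ := hc
    cases Option.some_injective _ hhead
    obtain rfl : d = 0 := by
      by_contra hd
      have := (segment_covBy (M := M) (by omega : t + 1 < n)).lt.trans_le
        (monotone_segment M (by omega : t + 1 ≤ t + d))
      exact this.ne (Option.some_injective _ hlast)
    exact Or.inl ⟨rfl, rfl⟩
  | @cons _ y rest _ ks hk _ ih =>
    obtain ⟨rfl, hxy, hy⟩ := hc.of_cons_cons
    obtain ⟨d, rfl⟩ : ∃ d', d = d' + 1 := by
      rcases d with _ | d
      · exact absurd (hxy.lt.trans_le hy.le) (lt_irrefl _)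
      · exact ⟨d, rfl⟩
    have hyM : y.pt M = M := by simpa [segment_pt_self] using hy.le.2 M
    rw [canonChain_succ, canonLabels_succ]
    rcases isPtLabel_segment_eq_or_lt (by omega) hk hyM with ⟨rfl, rfl⟩ | ⟨hlt, hne⟩
    · rw [← add_assoc, add_right_comm] at hy
      rcases ih (by omega) hy with ⟨hc, hks⟩ | ⟨hlt, hne⟩
      · exact Or.inl ⟨congrArg _ hc, congrArg _ hks⟩
      · exact Or.inr ⟨.cons hlt, fun h => hne (List.cons.inj h).2⟩
    · exact Or.inr ⟨.rel hlt, fun h => hne (List.cons.inj (List.cons.inj h).2).1⟩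

theorem hasUniqueELChain_segment (M : Fin n) :
    HasUniqueELChain (segment M 0) (segment M (n - 1)) := by
  have hn : 0 + (n - 1) < n := by have := M.pos; omega
  have key : ∀ {c ks}, PtSatChain (segment M 0) (segment M (n - 1)) c → PtLabelSeq c ks → _ :=
    fun hc hks => eq_canonChain_or_lex_lt hn (by rwa [zero_add]) hks
  have hsat : PtSatChain (segment M 0) (segment M (n - 1)) (canonChain M 0 (n - 1)) := by
    simpa using ptSatChain_canonChain hn
  have hlabels :
      ∀ {ks}, PtLabelSeq (canonChain M 0 (n - 1)) ks → ks = canonLabels M 0 (n - 1) :=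
    fun hks => ((key hsat hks).resolve_right fun h => h.2 rfl).2
  refine ⟨canonChain M 0 (n - 1),
    ⟨hsat, ⟨_, ptLabelSeq_canonChain hn, pairwise_canonLabels M 0 _⟩,
      fun c' ks ks' hc' hks hks' => ?_⟩, ?_⟩
  · rw [hlabels hks]
    exact (key hc' hks').imp (fun h => h.2.symm) And.left
  · rintro c ⟨hc, ⟨ks, hks, -⟩, hleast⟩
    refine ((key hc hks).resolve_right fun hlt => ?_).1
    rcases hleast _ ks _ hsat hks (ptLabelSeq_canonChain hn) with h | h
    · exact irrefl _ (h ▸ hlt.1)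
    · exact asymm hlt.1 h

end PtPartition

theorem stmt6_general (n : ℕ) (l₀ w : PtPartition n)
    (h0 : l₀.sd = ⊥) (hw : w.sd = ⊤) :
    ∃! c : List (PtPartition n),
      PtSatChain l₀ w c ∧
      (∃ ks : List (ℕ × ℕ), PtLabelSeq c ks ∧
        ks.Pairwise (Prod.Lex (· < ·) (· < ·))) ∧
      (∀ c' ks ks', PtSatChain l₀ w c' → PtLabelSeq c ks → PtLabelSeq c' ks' →
        ks = ks' ∨ List.Lex (Prod.Lex (· < ·) (· < ·)) ks ks') := by
  rcases Nat.eq_zero_or_pos n with rfl | hn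
  · obtain rfl : l₀ = w :=
      PtPartition.ext_of_sd_pt (Setoid.ext fun x => x.elim0) (funext fun x => x.elim0)
    exact hasUniqueELChain_self l₀
  · have h := PtPartition.hasUniqueELChain_segment (w.pt ⟨0, hn⟩)
    rwa [← PtPartition.eq_segment_zero h0, ← PtPartition.eq_segment_pred hw] at h

/-- The above labelling, with labels ordered lexicographically, is an
EL-labelling of every maximal interval of the pointed partition poset (from
the discrete pointed partition `l₀` to a maximal element `w`, which has a
single pointed block): there is a unique maximal chain with strictly
increasing label sequence, and its label sequence is lexicographically
least. -/
theorem stmt6 (n : ℕ) (l₀ w : PtPartition n)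
    (h0 : l₀.sd = ⊥) (hw : w.sd = ⊤) (hlw : PtLE l₀ w) :
    ∃! c : List (PtPartition n),
      PtSatChain l₀ w c ∧
      (∃ ks : List (ℕ × ℕ), PtLabelSeq c ks ∧
        ks.Pairwise (Prod.Lex (· < ·) (· < ·))) ∧
      (∀ c' ks ks', PtSatChain l₀ w c' → PtLabelSeq c ks → PtLabelSeq c' ks' →
        ks = ks' ∨ List.Lex (Prod.Lex (· < ·) (· < ·)) ks ks') :=
  stmt6_general n l₀ w h0 hw
end
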